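/- Let C, ḡ_Na, ḡ_K, ḡ_L > 0 and I, E_Na, E_K, E_L ∈ ℝ, and let b : ℝ⁴ → ℝ⁴ be the Hodgkin–Huxley vector field b(p₁,p₂,p₃,v) = (α_m(v)(1−p₁) − β_m(v)p₁, α_h(v)(1−p₂) − β_h(v)p₂, α_n(v)(1−p₃) − β_n(v)p₃, C⁻¹(I − ḡ_Na·p₁³p₂(v − E_Na) − ḡ_K·p₃⁴(v − E_K) − ḡ_L·(v − E_L))). Then for every T > 0 and every initial condition X₀ ∈ K := [0,1]³ × ℝ, the equation Ẋ(t) = b(X(t)), X(0) = X₀ has a unique solution X on [0,T], and X(t) ∈ K for every t ∈ [0,T]; in particular the gating components m(t), h(t), n(t) remain in [0,1] for all t. -/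

import Mathlib

/-!
The vector field is smooth: each `α`-rate is a constant divided by `dslope exp 0`, which is
analytic and positive. Hence it is locally Lipschitz, and uniqueness follows from Grönwall.

For existence, when `R` is large the field points strictly into the box `[0,1]³ × [-R, R]`
through every face: a gate at `0` opens at rate `α > 0`, a gate at `1` closes at rate `β > 0`,
and at `V = ±R` the leak current `g_L (V - E_L)` beats every other term. The field precomposed
with the projection onto the box is globally Lipschitz and bounded, so Picard–Lindelöf solves
it on all of `[0, T]`; a fencing argument keeps this solution inside the box, where the
projection is the identity, so it solves the original system.
-/

/-- Opening rate of `n` (removable singularity at `v = 10` filled by `0.1`). -/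
noncomputable def alphaN (v : ℝ) : ℝ :=
  if v = 10 then 0.1 else 0.01 * (10 - v) / (Real.exp ((10 - v) / 10) - 1)

/-- Closing rate of `n`. -/
noncomputable def betaN (v : ℝ) : ℝ := 0.125 * Real.exp (-v / 80)

/-- Opening rate of `m` (removable singularity at `v = 25` filled by `1`). -/
noncomputable def alphaM (v : ℝ) : ℝ :=
  if v = 25 then 1 else 0.1 * (25 - v) / (Real.exp ((25 - v) / 10) - 1)

/-- Closing rate of `m`. -/
noncomputable def betaM (v : ℝ) : ℝ := 4 * Real.exp (-v / 18)

/-- Opening rate of `h`. -/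
noncomputable def alphaH (v : ℝ) : ℝ := 0.07 * Real.exp (-v / 20)

/-- Closing rate of `h`. -/
noncomputable def betaH (v : ℝ) : ℝ := 1 / (Real.exp ((30 - v) / 10) + 1)

/-- The Hodgkin–Huxley vector field on `ℝ⁴`, state `(p₁, p₂, p₃, v) = (m, h, n, V)`. -/
noncomputable def hhField (C gNa gK gL I ENa EK EL : ℝ) (x : Fin 4 → ℝ) : Fin 4 → ℝ :=
  ![alphaM (x 3) * (1 - x 0) - betaM (x 3) * x 0,
    alphaH (x 3) * (1 - x 1) - betaH (x 3) * x 1,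
    alphaN (x 3) * (1 - x 2) - betaN (x 3) * x 2,
    C⁻¹ * (I - gNa * (x 0) ^ 3 * x 1 * (x 3 - ENa)
             - gK * (x 2) ^ 4 * (x 3 - EK) - gL * (x 3 - EL))]

open Set

section Box

variable {ι : Type*} {lo hi : ι → ℝ}

noncomputable def projBox (h : lo ≤ hi) (x : ι → ℝ) : ι → ℝ :=
  fun i => projIcc (lo i) (hi i) (h i) (x i)

lemma projBox_mem (h : lo ≤ hi) (x : ι → ℝ) : projBox h x ∈ Icc lo hi :=
  ⟨fun i => (projIcc _ _ (h i) (x i)).2.1, fun i => (projIcc _ _ (h i) (x i)).2.2⟩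

lemma projBox_apply_of_mem (h : lo ≤ hi) {x : ι → ℝ} {i : ι} (hx : x i ∈ Icc (lo i) (hi i)) :
    projBox h x i = x i := by
  simp [projBox, projIcc_of_mem (h i) hx]

lemma projBox_of_mem (h : lo ≤ hi) {x : ι → ℝ} (hx : x ∈ Icc lo hi) : projBox h x = x :=
  funext fun i => projBox_apply_of_mem h ⟨hx.1 i, hx.2 i⟩

lemma lipschitzWith_projBox [Fintype ι] (h : lo ≤ hi) : LipschitzWith 1 (projBox h) := by
  refine LipschitzWith.of_dist_le_mul fun x y => ?_
  rw [NNReal.coe_one, one_mul, dist_pi_le_iff dist_nonneg]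
  intro i
  calc dist (projBox h x i) (projBox h y i) ≤ dist (x i) (y i) := by
        simpa [projBox, Subtype.dist_eq] using (LipschitzWith.projIcc (h i)).dist_le_mul (x i) (y i)
    _ ≤ dist x y := dist_le_pi_dist x y i

def PointsInwardOnBox (v : (ι → ℝ) → ι → ℝ) (lo hi : ι → ℝ) : Prop :=
  ∀ y ∈ Icc lo hi, ∀ i, (y i = lo i → 0 < v y i) ∧ (y i = hi i → v y i < 0)

end Box

lemma mapsTo_Icc_of_hasDerivWithinAt_inward {f f' : ℝ → ℝ} {a b lo hi : ℝ}
    (hf : ∀ t ∈ Icc a b, HasDerivWithinAt f (f' t) (Icc a b) t) (ha : f a ∈ Icc lo hi)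
    (hlo : ∀ t ∈ Ico a b, f t = lo → 0 < f' t) (hhi : ∀ t ∈ Ico a b, f t = hi → f' t < 0) :
    MapsTo f (Icc a b) (Icc lo hi) := by
  have hcont : ContinuousOn f (Icc a b) := fun t ht => (hf t ht).continuousWithinAt
  have hright : ∀ t ∈ Ico a b, HasDerivWithinAt f (f' t) (Ici t) t := fun t ht =>
    (hf t (Ico_subset_Icc_self ht)).mono_of_mem_nhdsWithin (Icc_mem_nhdsGE_of_mem ht)
  intro t ht
  refine ⟨?_, ?_⟩
  · exact image_le_of_deriv_right_lt_deriv_boundary' continuousOn_const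
      (fun s _ => hasDerivWithinAt_const s _ lo) ha.1 hcont hright
      (fun s hs hs' => hlo s hs hs'.symm) ht
  · exact image_le_of_deriv_right_lt_deriv_boundary hcont hright ha.2
      (fun s => hasDerivAt_const s hi) hhi ht

section Ode

variable {E : Type*} [NormedAddCommGroup E] [NormedSpace ℝ E]

lemma exists_eq_forall_mem_Icc_hasDerivWithinAt_of_lipschitzWith [CompleteSpace E]
    {v : E → E} {K : NNReal} {L : ℝ} (hv : LipschitzWith K v) (hb : ∀ x, ‖v x‖ ≤ L)
    {a b : ℝ} (hab : a ≤ b) (x₀ : E) :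
    ∃ α : ℝ → E, α a = x₀ ∧ ∀ t ∈ Icc a b, HasDerivWithinAt α (v (α t)) (Icc a b) t := by
  have hL : 0 ≤ L := (norm_nonneg _).trans (hb x₀)
  have hpl : IsPicardLindelof (fun _ => v) (tmin := a) (tmax := b) ⟨a, left_mem_Icc.2 hab⟩ x₀
      ⟨L * (b - a), by have := sub_nonneg.2 hab; positivity⟩ 0 ⟨L, hL⟩ K :=
    .of_time_independent (fun x _ => hb x) hv.lipschitzOnWith (by simp [hab]; exact le_rfl)
  exact hpl.exists_eq_forall_mem_Icc_hasDerivWithinAt₀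

lemma ODE_solution_unique_of_locallyLipschitz {v : E → E} (hv : LocallyLipschitz v)
    {X Y : ℝ → E} {a b : ℝ}
    (hX : ∀ t ∈ Icc a b, HasDerivWithinAt X (v (X t)) (Icc a b) t)
    (hY : ∀ t ∈ Icc a b, HasDerivWithinAt Y (v (Y t)) (Icc a b) t) (h : X a = Y a) :
    EqOn X Y (Icc a b) := by
  have hXc : ContinuousOn X (Icc a b) := fun t ht => (hX t ht).continuousWithinAt
  have hYc : ContinuousOn Y (Icc a b) := fun t ht => (hY t ht).continuousWithinAt
  set s := X '' Icc a b ∪ Y '' Icc a b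
  obtain ⟨K, hK⟩ := hv.locallyLipschitzOn.exists_lipschitzOnWith_of_compact
    ((isCompact_Icc.image_of_continuousOn hXc).union (isCompact_Icc.image_of_continuousOn hYc))
  have hright : ∀ {Z : ℝ → E}, (∀ t ∈ Icc a b, HasDerivWithinAt Z (v (Z t)) (Icc a b) t) →
      ∀ t ∈ Ico a b, HasDerivWithinAt Z (v (Z t)) (Ici t) t := fun hZ t ht =>
    (hZ t (Ico_subset_Icc_self ht)).mono_of_mem_nhdsWithin (Icc_mem_nhdsGE_of_mem ht)
  exact ODE_solution_unique_of_mem_Icc_right (v := fun _ => v) (s := fun _ => s)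
    (fun _ _ => hK) hXc (hright hX)
    (fun t ht => .inl (mem_image_of_mem X (Ico_subset_Icc_self ht))) hYc (hright hY)
    (fun t ht => .inr (mem_image_of_mem Y (Ico_subset_Icc_self ht))) h

end Ode

namespace PointsInwardOnBox

variable {ι : Type*} {lo hi : ι → ℝ} {v : (ι → ℝ) → ι → ℝ}

lemma mapsTo_of_hasDerivWithinAt_projBox (hv : PointsInwardOnBox v lo hi) (h : lo ≤ hi)
    {X : ℝ → ι → ℝ} {a b : ℝ}
    (hX : ∀ t ∈ Icc a b, HasDerivWithinAt X (v (projBox h (X t))) (Icc a b) t)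
    (ha : X a ∈ Icc lo hi) : MapsTo X (Icc a b) (Icc lo hi) := by
  have hface : ∀ t i, X t i = lo i ∨ X t i = hi i → projBox h (X t) i = X t i := by
    rintro t i (hi' | hi') <;> apply projBox_apply_of_mem h <;> simp [hi', h i]
  intro t ht
  have hcoord : ∀ i, X t i ∈ Icc (lo i) (hi i) := fun i =>
    mapsTo_Icc_of_hasDerivWithinAt_inward (fun s hs => hasDerivWithinAt_pi.1 (hX s hs) i)
      ⟨ha.1 i, ha.2 i⟩
      (fun s _ hs => by
        simpa [hface s i (.inl hs), hs] using (hv _ (projBox_mem h (X s)) i).1)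
      (fun s _ hs => by
        simpa [hface s i (.inr hs), hs] using (hv _ (projBox_mem h (X s)) i).2) ht
  exact ⟨fun i => (hcoord i).1, fun i => (hcoord i).2⟩

theorem exists_solution_mapsTo [Fintype ι] (hv : PointsInwardOnBox v lo hi) (h : lo ≤ hi)
    {K : NNReal} (hlip : LipschitzOnWith K v (Icc lo hi)) {a b : ℝ} (hab : a ≤ b) {x₀ : ι → ℝ}
    (hx₀ : x₀ ∈ Icc lo hi) :
    ∃ X : ℝ → ι → ℝ, X a = x₀ ∧
      (∀ t ∈ Icc a b, HasDerivWithinAt X (v (X t)) (Icc a b) t) ∧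
      MapsTo X (Icc a b) (Icc lo hi) := by
  obtain ⟨L, hL⟩ := isCompact_Icc.exists_bound_of_continuousOn hlip.continuousOn
  have hlip' : LipschitzWith (K * 1) (v ∘ projBox h) := lipschitzOnWith_univ.1 <|
    hlip.comp (lipschitzWith_projBox h).lipschitzOnWith fun x _ => projBox_mem h x
  obtain ⟨X, hX₀, hX⟩ := exists_eq_forall_mem_Icc_hasDerivWithinAt_of_lipschitzWith hlip'
    (fun x => hL _ (projBox_mem h x)) hab x₀
  have hmaps := hv.mapsTo_of_hasDerivWithinAt_projBox h hX (hX₀ ▸ hx₀)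
  refine ⟨X, hX₀, fun t ht => ?_, hmaps⟩
  simpa [projBox_of_mem h (hmaps ht)] using hX t ht

end PointsInwardOnBox

open Real

/-- Writing the `α`-rates as reciprocals of this analytic function removes their apparent
singularities. -/
noncomputable def expSlope : ℝ → ℝ := dslope exp 0

lemma expSlope_of_ne {x : ℝ} (hx : x ≠ 0) : expSlope x = (exp x - 1) / x := by
  simp [expSlope, dslope_of_ne _ hx, slope, div_eq_inv_mul]

lemma expSlope_zero : expSlope 0 = 1 := by simp [expSlope, Real.deriv_exp]

lemma expSlope_pos (x : ℝ) : 0 < expSlope x := by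
  rcases lt_trichotomy x 0 with hx | rfl | hx
  · rw [expSlope_of_ne hx.ne]
    exact div_pos_of_neg_of_neg (sub_neg.2 (exp_lt_one_iff.2 hx)) hx
  · simp [expSlope_zero]
  · rw [expSlope_of_ne hx.ne']
    exact div_pos (sub_pos.2 (one_lt_exp_iff.2 hx)) hx

lemma inv_expSlope_of_ne {x : ℝ} (hx : x ≠ 0) : (expSlope x)⁻¹ = x / (exp x - 1) := by
  rw [expSlope_of_ne hx, inv_div]

lemma analyticAt_expSlope (x : ℝ) : AnalyticAt ℝ expSlope x := by
  rcases eq_or_ne x 0 with rfl | hx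
  · obtain ⟨p, hp⟩ := analyticAt_rexp (x := 0)
    exact hp.has_fpower_series_dslope_fslope.analyticAt
  · have heq : (fun y => (exp y - 1) / y) =ᶠ[nhds x] expSlope := by
      filter_upwards [isOpen_ne.mem_nhds hx] with y hy using (expSlope_of_ne hy).symm
    exact ((analyticAt_rexp.sub analyticAt_const).div analyticAt_id hx).congr heq

lemma contDiff_expSlope {n : WithTop ℕ∞} : ContDiff ℝ n expSlope :=
  contDiff_iff_contDiffAt.2 fun x => (analyticAt_expSlope x).contDiffAt

lemma alphaN_eq (v : ℝ) : alphaN v = 0.1 * (expSlope ((10 - v) / 10))⁻¹ := by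
  rcases eq_or_ne v 10 with rfl | hv
  · simp [alphaN, expSlope_zero]
  · rw [alphaN, if_neg hv, inv_expSlope_of_ne (by intro h; apply hv; linarith)]
    ring

lemma alphaM_eq (v : ℝ) : alphaM v = (expSlope ((25 - v) / 10))⁻¹ := by
  rcases eq_or_ne v 25 with rfl | hv
  · simp [alphaM, expSlope_zero]
  · rw [alphaM, if_neg hv, inv_expSlope_of_ne (by intro h; apply hv; linarith)]
    ring

lemma alphaN_pos (v : ℝ) : 0 < alphaN v := by
  have := expSlope_pos ((10 - v) / 10)
  rw [alphaN_eq]; positivity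

lemma alphaM_pos (v : ℝ) : 0 < alphaM v := by
  have := expSlope_pos ((25 - v) / 10)
  rw [alphaM_eq]; positivity

lemma alphaH_pos (v : ℝ) : 0 < alphaH v := by unfold alphaH; positivity

lemma betaN_pos (v : ℝ) : 0 < betaN v := by unfold betaN; positivity

lemma betaM_pos (v : ℝ) : 0 < betaM v := by unfold betaM; positivity

lemma betaH_pos (v : ℝ) : 0 < betaH v := by unfold betaH; positivity

section Smoothness

variable {n : WithTop ℕ∞}

@[fun_prop]
lemma contDiff_alphaN : ContDiff ℝ n alphaN := by
  rw [funext alphaN_eq]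
  exact contDiff_const.mul <|
    (contDiff_expSlope.comp (by fun_prop)).inv fun v => (expSlope_pos _).ne'

@[fun_prop]
lemma contDiff_alphaM : ContDiff ℝ n alphaM := by
  rw [funext alphaM_eq]
  exact (contDiff_expSlope.comp (by fun_prop)).inv fun v => (expSlope_pos _).ne'

@[fun_prop]
lemma contDiff_alphaH : ContDiff ℝ n alphaH := by unfold alphaH; fun_prop

@[fun_prop]
lemma contDiff_betaN : ContDiff ℝ n betaN := by unfold betaN; fun_prop

@[fun_prop]
lemma contDiff_betaM : ContDiff ℝ n betaM := by unfold betaM; fun_prop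

@[fun_prop]
lemma contDiff_betaH : ContDiff ℝ n betaH := by
  unfold betaH
  exact contDiff_const.div (by fun_prop) fun v => by positivity

lemma contDiff_hhField (C gNa gK gL I ENa EK EL : ℝ) :
    ContDiff ℝ n (hhField C gNa gK gL I ENa EK EL) := by
  refine contDiff_pi.2 fun i => ?_
  fin_cases i <;>
    simp only [hhField, Fin.isValue, Fin.zero_eta, Fin.mk_one, Fin.reduceFinMk,
      Matrix.cons_val_zero, Matrix.cons_val_one, Matrix.cons_val] <;> fun_prop

end Smoothness

lemma mem_Icc_gates_voltage_iff {R : ℝ} {x : Fin 4 → ℝ} :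
    x ∈ Icc ![0, 0, 0, -R] ![1, 1, 1, R] ↔
      (∀ i : Fin 3, x i.castSucc ∈ Icc (0 : ℝ) 1) ∧ x 3 ∈ Icc (-R) R := by
  simp [Pi.le_def, Fin.forall_fin_succ]
  tauto

lemma pointsInwardOnBox_hhField {C gNa gK gL I ENa EK EL R : ℝ} (hC : 0 < C) (hgNa : 0 ≤ gNa)
    (hgK : 0 ≤ gK) (hgL : 0 < gL) (hENa : |ENa| ≤ R) (hEK : |EK| ≤ R) (hR : |I| / gL + |EL| < R) :
    PointsInwardOnBox (hhField C gNa gK gL I ENa EK EL) ![0, 0, 0, -R] ![1, 1, 1, R] := by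
  intro y hy i
  obtain ⟨hgate, -⟩ := mem_Icc_gates_voltage_iff.1 hy
  have hNa : 0 ≤ gNa * y 0 ^ 3 * y 1 :=
    mul_nonneg (mul_nonneg hgNa (pow_nonneg (hgate 0).1 3)) (hgate 1).1
  have hK : 0 ≤ gK * y 2 ^ 4 := by positivity
  have hleak : |I| + |gL * EL| < gL * R := by
    rw [abs_mul, abs_of_pos hgL, ← lt_sub_iff_add_lt, ← mul_sub, ← div_lt_iff₀' hgL]
    linarith
  have hNa₁ := mul_nonneg hNa (neg_le_iff_add_nonneg.1 (abs_le.1 hENa).1)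
  have hNa₂ := mul_nonneg hNa (sub_nonneg.2 (abs_le.1 hENa).2)
  have hK₁ := mul_nonneg hK (neg_le_iff_add_nonneg.1 (abs_le.1 hEK).1)
  have hK₂ := mul_nonneg hK (sub_nonneg.2 (abs_le.1 hEK).2)
  fin_cases i
  · constructor <;> intro h <;> simp_all [hhField, alphaM_pos, betaM_pos]
  · constructor <;> intro h <;> simp_all [hhField, alphaH_pos, betaH_pos]
  · constructor <;> intro h <;> simp_all [hhField, alphaN_pos, betaN_pos]
  · have hC' := inv_pos.2 hC
    refine ⟨fun h => mul_pos hC' ?_, fun h => mul_neg_of_pos_of_neg hC' ?_⟩ <;>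
      simp only [Fin.reduceFinMk, Fin.isValue, Matrix.cons_val] at h <;> rw [h] <;>
      linarith [abs_le.1 (le_refl |I|), abs_le.1 (le_refl |gL * EL|)]

/-- The deterministic Hodgkin–Huxley system: for every horizon `T > 0` and every
initial condition in `K = [0,1]³ × ℝ`, the ODE `Ẋ = b(X)` has a unique solution
on `[0,T]`, and this solution stays in `K` (the gating components remain
proportions in `[0,1]`). -/
theorem hh_ode_existence_uniqueness_viability
    (C gNa gK gL : ℝ) (hC : 0 < C) (hgNa : 0 < gNa) (hgK : 0 < gK) (hgL : 0 < gL)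
    (I ENa EK EL : ℝ) (T : ℝ) (hT : 0 < T)
    (X₀ : Fin 4 → ℝ) (hX₀ : ∀ i : Fin 3, X₀ i.castSucc ∈ Set.Icc (0 : ℝ) 1) :
    (∃ X : ℝ → (Fin 4 → ℝ), X 0 = X₀ ∧
      (∀ t ∈ Set.Icc 0 T,
        HasDerivWithinAt X (hhField C gNa gK gL I ENa EK EL (X t)) (Set.Icc 0 T) t) ∧
      (∀ t ∈ Set.Icc 0 T, ∀ i : Fin 3, X t i.castSucc ∈ Set.Icc (0 : ℝ) 1)) ∧
    (∀ X Y : ℝ → (Fin 4 → ℝ),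
      (X 0 = X₀ ∧ ∀ t ∈ Set.Icc 0 T,
        HasDerivWithinAt X (hhField C gNa gK gL I ENa EK EL (X t)) (Set.Icc 0 T) t) →
      (Y 0 = X₀ ∧ ∀ t ∈ Set.Icc 0 T,
        HasDerivWithinAt Y (hhField C gNa gK gL I ENa EK EL (Y t)) (Set.Icc 0 T) t) →
      Set.EqOn X Y (Set.Icc 0 T)) := by
  obtain ⟨R, hENa, hEK, hleak, hV₀⟩ :
      ∃ R, |ENa| ≤ R ∧ |EK| ≤ R ∧ |I| / gL + |EL| < R ∧ |X₀ 3| ≤ R := by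
    have : 0 ≤ |I| / gL := by positivity
    refine ⟨|ENa| + |EK| + |I| / gL + |EL| + |X₀ 3| + 1, ?_, ?_, ?_, ?_⟩ <;>
      linarith [abs_nonneg ENa, abs_nonneg EK, abs_nonneg EL, abs_nonneg (X₀ 3)]
  have hbounds : (![0, 0, 0, -R] : Fin 4 → ℝ) ≤ ![1, 1, 1, R] := by
    have : 0 ≤ R := (abs_nonneg _).trans hENa
    intro i; fin_cases i <;> simp [this]
  have hinward := pointsInwardOnBox_hhField hC hgNa.le hgK.le hgL hENa hEK hleak
  have hsmooth := contDiff_hhField (n := 1) C gNa gK gL I ENa EK EL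
  obtain ⟨K, hK⟩ :=
    hsmooth.contDiffOn.exists_lipschitzOnWith one_ne_zero (convex_Icc _ _) isCompact_Icc
  have hX₀R : X₀ ∈ Icc ![0, 0, 0, -R] ![1, 1, 1, R] :=
    mem_Icc_gates_voltage_iff.2 ⟨hX₀, abs_le.1 hV₀⟩
  obtain ⟨X, hX0, hX, hmaps⟩ := hinward.exists_solution_mapsTo hbounds hK hT.le hX₀R
  refine ⟨⟨X, hX0, hX, fun t ht => (mem_Icc_gates_voltage_iff.1 (hmaps ht)).1⟩, ?_⟩
  rintro X Y ⟨hX0, hX⟩ ⟨hY0, hY⟩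
  exact ODE_solution_unique_of_locallyLipschitz hsmooth.locallyLipschitz hX hY (hX0.trans hY0.symm)
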